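/- Let r > 0 and let (q^{(n)})_{n≥1} be a universal projector sequence with asymptotic rate r, i.e. orthogonal projections q^{(n)} ∈ M_n with (1/n)·log₂ tr(q^{(n)}) → r and tr(q^{(n)} ρ_n) → 1 for every consistent, stationary, ergodic quantum source (ρ_n) whose von Neumann entropy rate exists and is below r. Let (ρ_n)_{n≥1} be any consistent, stationary, ergodic quantum source whose von Neumann entropy rate exists and is strictly less than r, assume 0 < tr(q^{(n)}) < d^n for all n, and for each n fix a unit vector w^{(n)} in the range of q^{(n)} and an orthonormal basis (v^{(n)}_1,…,v^{(n)}_{K_n}) of the kernel of q^{(n)}. Then the entanglement fidelity of the projection compression scheme, given by the intrinsic formula F_e^{(n)} := |tr(ρ_n q^{(n)})|² + ∑_{k=1}^{K_n} |tr(ρ_n · w^{(n)}(v^{(n)}_k)†)|², satisfies F_e^{(n)} → 1 as n → ∞, and the compression rate (1/n)·log₂ tr(q^{(n)}) tends to r. -/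

import Mathlib

open Matrix Finset Filter Topology
open scoped ComplexOrder

noncomputable section

/-- `Mat d m` is the algebra of operators on the `m`-fold tensor power of `ℂ^d`,
realized as matrices indexed by words `Fin m → Fin d`. -/
abbrev Mat (d m : ℕ) : Type := Matrix (Fin m → Fin d) (Fin m → Fin d) ℂ

/-- Kronecker (tensor) product `A ⊗ B` of `A : Mat d m` and `B : Mat d i`. -/
def tens {d m i : ℕ} (A : Mat d m) (B : Mat d i) : Mat d (m + i) :=
  Matrix.of fun x y =>
    A (fun k => x (Fin.castAdd i k)) (fun k => y (Fin.castAdd i k)) *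
    B (fun k => x (Fin.natAdd m k)) (fun k => y (Fin.natAdd m k))

/-- A quantum source: each `ρ m` (for `m ≥ 1`) is positive semidefinite with trace 1. -/
def IsQSource (d : ℕ) (ρ : ∀ m, Mat d m) : Prop :=
  ∀ m, 1 ≤ m → (ρ m).PosSemidef ∧ (ρ m).trace = 1

/-- Consistency: `tr(ρ_m a) = tr(ρ_{m+i} (a ⊗ I^{⊗i}))`. -/
def QConsistent (d : ℕ) (ρ : ∀ m, Mat d m) : Prop :=
  ∀ m i, 1 ≤ m → 1 ≤ i → ∀ a : Mat d m,
    (ρ m * a).trace = (ρ (m + i) * tens a (1 : Mat d i)).trace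

/-- Stationarity: `tr(ρ_m a) = tr(ρ_{i+m} (I^{⊗i} ⊗ a))`. -/
def QStationary (d : ℕ) (ρ : ∀ m, Mat d m) : Prop :=
  ∀ m i, 1 ≤ m → 1 ≤ i → ∀ a : Mat d m,
    (ρ m * a).trace = (ρ (i + m) * tens (1 : Mat d i) a).trace

/-- Ergodicity: Cesàro averages of `tr(ρ_{m+i} (a ⊗ I^{⊗(i-m)} ⊗ b))` converge to
`tr(ρ_m a)·tr(ρ_m b)`. -/
def QErgodic (d : ℕ) (ρ : ∀ m, Mat d m) : Prop :=
  ∀ m, 1 ≤ m → ∀ a b : Mat d m,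
    Tendsto (fun n : ℕ =>
        (n : ℂ)⁻¹ * ∑ i ∈ Finset.Icc m n,
          (ρ (m + (i - m) + m) * tens (tens a (1 : Mat d (i - m))) b).trace)
      atTop (nhds ((ρ m * a).trace * (ρ m * b).trace))

/-- Weak mixing. -/
def QWeakMixing (d : ℕ) (ρ : ∀ m, Mat d m) : Prop :=
  ∀ m, 1 ≤ m → ∀ a b : Mat d m,
    Tendsto (fun n : ℕ =>
        (n : ℝ)⁻¹ * ∑ i ∈ Finset.Icc m n,
          norm ((ρ (m + (i - m) + m) * tens (tens a (1 : Mat d (i - m))) b).trace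
            - (ρ m * a).trace * (ρ m * b).trace))
      atTop (nhds 0)

/-- Strong mixing. -/
def QStrongMixing (d : ℕ) (ρ : ∀ m, Mat d m) : Prop :=
  ∀ m, 1 ≤ m → ∀ a b : Mat d m,
    Tendsto (fun i : ℕ =>
        (ρ (m + (i - m) + m) * tens (tens a (1 : Mat d (i - m))) b).trace)
      atTop (nhds ((ρ m * a).trace * (ρ m * b).trace))

/-- The `m`-fold elementary tensor `A_{j 1} ⊗ ⋯ ⊗ A_{j m}` of Kraus operators. -/
def krausPow {d : ℕ} {J : Type} [Fintype J] (A : J → Matrix (Fin d) (Fin d) ℂ)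
    {m : ℕ} (j : Fin m → J) : Mat d m :=
  Matrix.of fun x y => ∏ k, A (j k) (x k) (y k)

/-- The induced map `E^{⊗m}` of a memoryless channel with Kraus operators `A`. -/
def channelPow {d : ℕ} {J : Type} [Fintype J] (A : J → Matrix (Fin d) (Fin d) ℂ)
    (m : ℕ) (σ : Mat d m) : Mat d m :=
  ∑ j : Fin m → J, krausPow A j * σ * (krausPow A j)ᴴ

/-- A classical source on alphabet `Fin d`: each `p m` (for `m ≥ 1`) is a
probability distribution on words of length `m`. -/
def IsCSource (d : ℕ) (p : ∀ m, (Fin m → Fin d) → ℝ) : Prop :=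
  ∀ m, 1 ≤ m → (∀ x, 0 ≤ p m x) ∧ ∑ x, p m x = 1

def CConsistent (d : ℕ) (p : ∀ m, (Fin m → Fin d) → ℝ) : Prop :=
  ∀ m i, 1 ≤ m → 1 ≤ i → ∀ x : Fin m → Fin d,
    p m x = ∑ y : Fin i → Fin d, p (m + i) (Fin.append x y)

def CStationary (d : ℕ) (p : ∀ m, (Fin m → Fin d) → ℝ) : Prop :=
  ∀ m i, 1 ≤ m → 1 ≤ i → ∀ x : Fin m → Fin d,
    p m x = ∑ y : Fin i → Fin d, p (i + m) (Fin.append y x)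

def CErgodic (d : ℕ) (p : ∀ m, (Fin m → Fin d) → ℝ) : Prop :=
  ∀ m, 1 ≤ m → ∀ x y : Fin m → Fin d,
    Tendsto (fun n : ℕ =>
        (n : ℝ)⁻¹ * ∑ i ∈ Finset.Icc m n,
          ∑ z : Fin (i - m) → Fin d, p (m + (i - m) + m) (Fin.append (Fin.append x z) y))
      atTop (nhds (p m x * p m y))

def CWeakMixing (d : ℕ) (p : ∀ m, (Fin m → Fin d) → ℝ) : Prop :=
  ∀ m, 1 ≤ m → ∀ x y : Fin m → Fin d,
    Tendsto (fun n : ℕ =>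
        (n : ℝ)⁻¹ * ∑ i ∈ Finset.Icc m n,
          |(∑ z : Fin (i - m) → Fin d, p (m + (i - m) + m) (Fin.append (Fin.append x z) y))
            - p m x * p m y|)
      atTop (nhds 0)

def CStrongMixing (d : ℕ) (p : ∀ m, (Fin m → Fin d) → ℝ) : Prop :=
  ∀ m, 1 ≤ m → ∀ x y : Fin m → Fin d,
    Tendsto (fun i : ℕ =>
        ∑ z : Fin (i - m) → Fin d, p (m + (i - m) + m) (Fin.append (Fin.append x z) y))
      atTop (nhds (p m x * p m y))

/-- The classically correlated state `∑_x p(x) · ψ_{x 1}ψ_{x 1}† ⊗ ⋯ ⊗ ψ_{x m}ψ_{x m}†`. -/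
def clsState {d : ℕ} (ψ : Fin d → Fin d → ℂ) {m : ℕ} (pm : (Fin m → Fin d) → ℝ) : Mat d m :=
  ∑ x : Fin m → Fin d, (pm x : ℂ) •
    Matrix.of (fun u v => ∏ k, ψ (x k) (u k) * star (ψ (x k) (v k)))

/-- The probability `⟨u_{x 1} ⊗ ⋯ ⊗ u_{x m}, ρ (u_{x 1} ⊗ ⋯ ⊗ u_{x m})⟩` of
measurement outcome `x` in the product basis built from `u`. -/
def measProb {d m : ℕ} (ρ : Mat d m) (u : Fin d → Fin d → ℂ) (x : Fin m → Fin d) : ℝ :=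
  (∑ v : Fin m → Fin d, ∑ w : Fin m → Fin d,
    star (∏ k, u (x k) (v k)) * ρ v w * ∏ k, u (x k) (w k)).re

/-- Von Neumann entropy (base-2) of a Hermitian matrix, via its eigenvalues;
junk value `0` for non-Hermitian input.  The convention `0·log₂ 0 = 0` holds
automatically since `Real.logb 2 0 = 0`. -/
def vnEntropy {n : Type} [Fintype n] [DecidableEq n] (ρ : Matrix n n ℂ) : ℝ :=
  if h : ρ.IsHermitian then -∑ k, h.eigenvalues k * Real.logb 2 (h.eigenvalues k) else 0

/-! The upper bound `F_e ≤ 1` holds for every Kraus family `(B_j)` with `∑ B_jᴴ B_j = 1`: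
Cauchy–Schwarz for the inner product `⟪X, Y⟫ = tr(Y ρ Xᴴ)` gives `|tr(ρ B)|² ≤ tr(ρ BᴴB)`.
The projection scheme is such a family because `q` and the projection onto `ker q` sum to `1`,
so its fidelity is squeezed between `|tr(ρ_n q_n)|²`, which tends to `1` by universality,
and `1`. -/

namespace Matrix

variable {ι κ : Type*} [Fintype ι] [Fintype κ]

theorem PosSemidef.norm_trace_mul_sq_le [DecidableEq ι] {ρ : Matrix ι ι ℂ} (hρ : ρ.PosSemidef)
    (B : Matrix ι ι ℂ) :
    ‖(ρ * B).trace‖ ^ 2 ≤ ρ.trace.re * (ρ * (Bᴴ * B)).trace.re := by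
  let _ := ρ.toMatrixSeminormedAddCommGroup hρ
  let _ := ρ.toMatrixInnerProductSpace hρ
  have h := inner_mul_inner_self_le (𝕜 := ℂ) (1 : Matrix ι ι ℂ) B
  have h1 : (inner ℂ (1 : Matrix ι ι ℂ) B : ℂ) = (ρ * B).trace := by
    show (B * ρ * 1ᴴ).trace = _
    rw [conjTranspose_one, mul_one, trace_mul_comm]
  have h2 : (inner ℂ B (1 : Matrix ι ι ℂ) : ℂ) = star (ρ * B).trace := by
    rw [← inner_conj_symm, h1]
    rfl
  have h3 : (inner ℂ (1 : Matrix ι ι ℂ) 1 : ℂ) = ρ.trace := by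
    show (1 * ρ * 1ᴴ).trace = _
    rw [conjTranspose_one, one_mul, mul_one]
  have h4 : (inner ℂ B B : ℂ) = (ρ * (Bᴴ * B)).trace := by
    show (B * ρ * Bᴴ).trace = _
    rw [trace_mul_comm, ← Matrix.mul_assoc, trace_mul_comm]
  rwa [h1, h2, h3, h4, norm_star, ← sq] at h

def entanglementFidelity {J : Type*} [Fintype J] (ρ : Matrix ι ι ℂ) (B : J → Matrix ι ι ℂ) : ℝ :=
  ∑ j, ‖(ρ * B j).trace‖ ^ 2

theorem PosSemidef.entanglementFidelity_le [DecidableEq ι] {J : Type*} [Fintype J]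
    {ρ : Matrix ι ι ℂ} (hρ : ρ.PosSemidef) {B : J → Matrix ι ι ℂ}
    (hB : ∑ j, (B j)ᴴ * B j = 1) :
    entanglementFidelity ρ B ≤ ρ.trace.re ^ 2 :=
  calc entanglementFidelity ρ B
      ≤ ∑ j, ρ.trace.re * (ρ * ((B j)ᴴ * B j)).trace.re :=
        Finset.sum_le_sum fun j _ => hρ.norm_trace_mul_sq_le (B j)
    _ = ρ.trace.re ^ 2 := by
        rw [← Finset.mul_sum, ← Complex.re_sum, ← trace_sum, ← Finset.mul_sum, hB, mul_one, sq]

theorem sum_vecMulVec_star_mulVec (v : κ → ι → ℂ) (x : ι → ℂ) :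
    (∑ k, vecMulVec (v k) (star (v k))) *ᵥ x = ∑ k, (star (v k) ⬝ᵥ x) • v k := by
  simp only [sum_mulVec, vecMulVec_mulVec, op_smul_eq_smul]

theorem sum_vecMulVec_star_mulVec_of_mem_span [DecidableEq κ] {v : κ → ι → ℂ}
    (hv : ∀ k l, star (v k) ⬝ᵥ v l = if k = l then 1 else 0) {x : ι → ℂ}
    (hx : x ∈ Submodule.span ℂ (Set.range v)) :
    (∑ k, vecMulVec (v k) (star (v k))) *ᵥ x = x := by
  induction hx using Submodule.span_induction with
  | mem x hx =>
    obtain ⟨l, rfl⟩ := hx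
    simp [sum_vecMulVec_star_mulVec, hv, ite_smul]
  | zero => exact mulVec_zero _
  | add x y _ _ hx hy => rw [mulVec_add, hx, hy]
  | smul a x _ hx => rw [mulVec_smul, hx]

theorem sum_vecMulVec_star_mul_eq_zero {q : Matrix ι ι ℂ} {v : κ → ι → ℂ} (hq : q.IsHermitian)
    (hv : ∀ k, q *ᵥ v k = 0) : (∑ k, vecMulVec (v k) (star (v k))) * q = 0 := by
  rw [Finset.sum_mul]
  refine Finset.sum_eq_zero fun k _ => ?_
  rw [vecMulVec_mul, ← hq.eq, vecMul_conjTranspose, star_star, hv, star_zero, vecMulVec_zero]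

theorem add_sum_vecMulVec_star_eq_one [DecidableEq ι] [DecidableEq κ] {q : Matrix ι ι ℂ}
    {v : κ → ι → ℂ} (hq : q.IsHermitian) (hqq : q * q = q) (hker : ∀ k, q *ᵥ v k = 0)
    (hv : ∀ k l, star (v k) ⬝ᵥ v l = if k = l then 1 else 0)
    (hspan : ∀ x, q *ᵥ x = 0 → x ∈ Submodule.span ℂ (Set.range v)) :
    q + ∑ k, vecMulVec (v k) (star (v k)) = 1 := by
  set P := ∑ k, vecMulVec (v k) (star (v k))
  refine ext_iff_mulVec.mpr fun x => ?_
  have hker_sub : q *ᵥ (x - q *ᵥ x) = 0 := by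
    rw [mulVec_sub, mulVec_mulVec, hqq, sub_self]
  have hPx : P *ᵥ x = x - q *ᵥ x :=
    calc P *ᵥ x = P *ᵥ (x - q *ᵥ x) + (P * q) *ᵥ x := by
          rw [← mulVec_mulVec, ← mulVec_add, sub_add_cancel]
      _ = x - q *ᵥ x := by
          rw [sum_vecMulVec_star_mulVec_of_mem_span hv (hspan _ hker_sub),
            sum_vecMulVec_star_mul_eq_zero hq hker, zero_mulVec, add_zero]
  rw [add_mulVec, hPx, one_mulVec, add_sub_cancel]

/-- Kraus operators of the compression scheme of the projection `q`: `q` itself (`none`) and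
the rank-one maps `w (v k)ᴴ` sending the kernel of `q` to the unit vector `w` (`some k`). -/
def projectionKraus (q : Matrix ι ι ℂ) (w : ι → ℂ) (v : κ → ι → ℂ) :
    Option κ → Matrix ι ι ℂ
  | none => q
  | some k => vecMulVec w (star (v k))

theorem entanglementFidelity_projectionKraus (ρ q : Matrix ι ι ℂ) (w : ι → ℂ) (v : κ → ι → ℂ) :
    entanglementFidelity ρ (projectionKraus q w v) =
      ‖(ρ * q).trace‖ ^ 2 + ∑ k, ‖(ρ * vecMulVec w (star (v k))).trace‖ ^ 2 :=
  Fintype.sum_option _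

theorem sum_conjTranspose_mul_projectionKraus [DecidableEq ι] [DecidableEq κ] {q : Matrix ι ι ℂ}
    {w : ι → ℂ} {v : κ → ι → ℂ} (hq : q.IsHermitian) (hqq : q * q = q)
    (hker : ∀ k, q *ᵥ v k = 0) (hv : ∀ k l, star (v k) ⬝ᵥ v l = if k = l then 1 else 0)
    (hspan : ∀ x, q *ᵥ x = 0 → x ∈ Submodule.span ℂ (Set.range v)) (hw : star w ⬝ᵥ w = 1) :
    ∑ o, (projectionKraus q w v o)ᴴ * projectionKraus q w v o = 1 := by
  simp only [Fintype.sum_option, projectionKraus, conjTranspose_vecMulVec, star_star,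
    vecMulVec_mul_vecMulVec, hw, one_smul, hq.eq, hqq]
  exact add_sum_vecMulVec_star_eq_one hq hqq hker hv hspan

end Matrix

theorem universal_compression_fidelity_general
    (d : ℕ) (r : ℝ)
    (q : ∀ n, Mat d n)
    (hproj : ∀ n, 1 ≤ n → (q n).IsHermitian ∧ q n * q n = q n)
    (hrate : Tendsto (fun n : ℕ => Real.logb 2 ((q n).trace.re) / n) atTop (nhds r))
    (huniv : ∀ σ : ∀ m, Mat d m,
      IsQSource d σ → QConsistent d σ → QStationary d σ → QErgodic d σ →
      (∃ s, s < r ∧ Tendsto (fun n : ℕ => vnEntropy (σ n) / n) atTop (nhds s)) →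
      Tendsto (fun n : ℕ => (q n * σ n).trace) atTop (nhds 1))
    (ρ : ∀ m, Mat d m)
    (hρ : IsQSource d ρ) (hc : QConsistent d ρ) (hs : QStationary d ρ)
    (he : QErgodic d ρ)
    (hent : ∃ s, s < r ∧ Tendsto (fun n : ℕ => vnEntropy (ρ n) / n) atTop (nhds s))
    (K : ℕ → ℕ)
    (w : ∀ n, (Fin n → Fin d) → ℂ)
    (hw_unit : ∀ n, ∑ u, star (w n u) * w n u = 1)
    (v : ∀ n, Fin (K n) → (Fin n → Fin d) → ℂ)
    (hv_ker : ∀ n k, (q n) *ᵥ (v n k) = 0)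
    (hv_on : ∀ n k l, ∑ u, star (v n k u) * v n l u = if k = l then (1 : ℂ) else 0)
    (hv_span : ∀ n (x : (Fin n → Fin d) → ℂ),
      (q n) *ᵥ x = 0 → x ∈ Submodule.span ℂ (Set.range (v n))) :
    Tendsto (fun n : ℕ =>
        norm ((ρ n * q n).trace) ^ 2 +
          ∑ k : Fin (K n),
            norm ((ρ n * Matrix.of (fun a b => w n a * star (v n k b))).trace) ^ 2)
      atTop (nhds 1) ∧
    Tendsto (fun n : ℕ => Real.logb 2 ((q n).trace.re) / n) atTop (nhds r) := by
  refine ⟨?_, hrate⟩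
  have hlower : Tendsto (fun n => ‖(ρ n * q n).trace‖ ^ 2) atTop (𝓝 1) := by
    have h := (huniv ρ hρ hc hs he hent).norm.pow 2
    rw [norm_one, one_pow] at h
    exact h.congr fun n => by rw [trace_mul_comm]
  refine tendsto_of_tendsto_of_tendsto_of_le_of_le' hlower tendsto_const_nhds
    (Eventually.of_forall fun n => le_add_of_nonneg_right (sum_nonneg fun _ _ => sq_nonneg _)) ?_
  filter_upwards [eventually_ge_atTop 1] with n hn
  obtain ⟨hρ_psd, hρ_tr⟩ := hρ n hn
  obtain ⟨hq, hqq⟩ := hproj n hn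
  have hF := hρ_psd.entanglementFidelity_le
    (sum_conjTranspose_mul_projectionKraus hq hqq (hv_ker n) (hv_on n) (hv_span n) (hw_unit n))
  rw [entanglementFidelity_projectionKraus, hρ_tr, Complex.one_re, one_pow] at hF
  exact hF

/-- for a universal projector sequence of rate `r` and any
consistent stationary ergodic source of entropy rate below `r`, the
entanglement fidelity of the projection compression scheme tends to `1`
and the compression rate tends to `r`. -/
theorem universal_compression_fidelity
    (d : ℕ) (hd : 2 ≤ d) (r : ℝ) (hr0 : 0 < r)
    (q : ∀ n, Mat d n)
    (hproj : ∀ n, 1 ≤ n → (q n).IsHermitian ∧ q n * q n = q n)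
    (hrate : Tendsto (fun n : ℕ => Real.logb 2 ((q n).trace.re) / n) atTop (nhds r))
    (huniv : ∀ σ : ∀ m, Mat d m,
      IsQSource d σ → QConsistent d σ → QStationary d σ → QErgodic d σ →
      (∃ s, s < r ∧ Tendsto (fun n : ℕ => vnEntropy (σ n) / n) atTop (nhds s)) →
      Tendsto (fun n : ℕ => (q n * σ n).trace) atTop (nhds 1))
    (ρ : ∀ m, Mat d m)
    (hρ : IsQSource d ρ) (hc : QConsistent d ρ) (hs : QStationary d ρ)
    (he : QErgodic d ρ)
    (hent : ∃ s, s < r ∧ Tendsto (fun n : ℕ => vnEntropy (ρ n) / n) atTop (nhds s))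
    (htr : ∀ n, 0 < (q n).trace.re ∧ (q n).trace.re < (d : ℝ) ^ n)
    (K : ℕ → ℕ)
    (w : ∀ n, (Fin n → Fin d) → ℂ)
    (hw_mem : ∀ n, (q n) *ᵥ (w n) = w n)
    (hw_unit : ∀ n, ∑ u, star (w n u) * w n u = 1)
    (v : ∀ n, Fin (K n) → (Fin n → Fin d) → ℂ)
    (hv_ker : ∀ n k, (q n) *ᵥ (v n k) = 0)
    (hv_on : ∀ n k l, ∑ u, star (v n k u) * v n l u = if k = l then (1 : ℂ) else 0)
    (hv_span : ∀ n (x : (Fin n → Fin d) → ℂ),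
      (q n) *ᵥ x = 0 → x ∈ Submodule.span ℂ (Set.range (v n))) :
    Tendsto (fun n : ℕ =>
        norm ((ρ n * q n).trace) ^ 2 +
          ∑ k : Fin (K n),
            norm ((ρ n * Matrix.of (fun a b => w n a * star (v n k b))).trace) ^ 2)
      atTop (nhds 1) ∧
    Tendsto (fun n : ℕ => Real.logb 2 ((q n).trace.re) / n) atTop (nhds r) :=
  universal_compression_fidelity_general d r q hproj hrate huniv ρ hρ hc hs he hent K w hw_unit v
    hv_ker hv_on hv_span
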